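/- arXiv:1805.02519 — 2 statements merged into one kernel-verified Lean document; each statement's English description precedes it below -/
import Mathlib

section
/- If T is a subcubic tree of order n with independence number α, then the number of maximum independent sets of T is at most φ^(2n−3α+1), where φ = (1+√5)/2 is the golden ratio. -/
open SimpleGraph

/-- A set of vertices is independent if its vertices are pairwise non-adjacent. -/
def SimpleGraph.IsIndepSet' {V : Type*} (G : SimpleGraph V) (s : Set V) : Prop :=
  s.Pairwise (fun u v => ¬ G.Adj u v)

/-- The independence number of a graph. -/
noncomputable def indepNum {V : Type*} (G : SimpleGraph V) : ℕ :=
  sSup {k | ∃ s : Finset V, G.IsIndepSet' ↑s ∧ s.card = k}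

/-- The number of maximum independent sets of a graph. -/
noncomputable def numMaxIndep {V : Type*} (G : SimpleGraph V) : ℕ :=
  {s : Finset V | G.IsIndepSet' ↑s ∧ s.card = _root_.indepNum G}.ncard

/-!
By strong induction on finite vertex sets `s` of a forest of maximum degree at most 3, the number
of maximum independent sets of `G[s]` is at most `φ ^ (3|s| - 3α(G[s]) - e(G[s]))`; for a tree on
`n` vertices the exponent is `2n - 3α + 1`. The maximum independent sets of `G[s]` through a
vertex `y` lose `y` to become maximum independent sets of `G[s \ N[y]]` (when there are any), and
passing to `s \ N[y]` lowers the exponent by `∑_{x ∈ N(y)} (3 - deg x) ≥ 0`. Every maximum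
independent set meets each closed neighbourhood. A longest path yields a leaf `u` whose neighbour
`w` has degree at most 2 or carries a second leaf. With `E` the exponent of `s`, in the first case
branching on `u` and `w` costs `φ^(E-1) + φ^(E-2) = φ^E`; in the second, no maximum independent
set contains `w`, and the branch on `u` costs at most `φ^E`.
-/

open Finset

namespace SimpleGraph

open scoped Classical

variable {V : Type*} (G : SimpleGraph V)

noncomputable def neighborsIn (s : Finset V) (v : V) : Finset V := {w ∈ s | G.Adj v w}

noncomputable def indepNumOn (s : Finset V) : ℕ :=
  (s.powerset.filter fun A : Finset V => G.IsIndepSet (A : Set V)).sup card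

noncomputable def maxIndepSetsOn (s : Finset V) : Finset (Finset V) :=
  s.powerset.filter fun A : Finset V => G.IsIndepSet (A : Set V) ∧ #A = G.indepNumOn s

noncomputable def edgesOn (s : Finset V) : Finset (Sym2 V) := {e ∈ s.sym2 | e ∈ G.edgeSet}

noncomputable def misExponent (s : Finset V) : ℤ :=
  3 * #s - 3 * G.indepNumOn s - #(G.edgesOn s)

variable {G} {s A : Finset V} {u v y : V}

@[simp]
lemma mem_neighborsIn : u ∈ G.neighborsIn s v ↔ u ∈ s ∧ G.Adj v u := by
  simp [neighborsIn]

lemma mem_maxIndepSetsOn :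
    A ∈ G.maxIndepSetsOn s ↔ A ⊆ s ∧ G.IsIndepSet (A : Set V) ∧ #A = G.indepNumOn s := by
  simp [maxIndepSetsOn]

lemma card_le_indepNumOn (hAs : A ⊆ s) (hA : G.IsIndepSet (A : Set V)) :
    #A ≤ G.indepNumOn s :=
  le_sup (f := card) (mem_filter.2 ⟨mem_powerset.2 hAs, hA⟩)

lemma exists_mem_maxIndepSetsOn (s : Finset V) : ∃ A, A ∈ G.maxIndepSetsOn s := by
  obtain ⟨A, hA, hcard⟩ :=
    exists_mem_eq_sup (s.powerset.filter fun A : Finset V => G.IsIndepSet (A : Set V))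
      ⟨∅, by simp⟩ card
  simp only [mem_filter, mem_powerset] at hA
  exact ⟨A, mem_maxIndepSetsOn.2 ⟨hA.1, hA.2, hcard.symm⟩⟩

lemma isIndepSet_insert_of_disjoint (hAs : A ⊆ s) (hA : G.IsIndepSet (A : Set V))
    (hdisj : Disjoint (G.neighborsIn s v) A) : G.IsIndepSet (↑(insert v A) : Set V) := by
  rw [coe_insert]
  refine Set.pairwise_insert.2 ⟨hA, fun w hw _ => ⟨fun hvw => ?_, fun hwv => ?_⟩⟩
  · exact Finset.disjoint_left.1 hdisj (mem_neighborsIn.2 ⟨hAs hw, hvw⟩) hw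
  · exact Finset.disjoint_left.1 hdisj (mem_neighborsIn.2 ⟨hAs hw, hwv.symm⟩) hw

lemma exists_mem_of_mem_maxIndepSetsOn (hA : A ∈ G.maxIndepSetsOn s) (hv : v ∈ s) :
    ∃ y ∈ insert v (G.neighborsIn s v), y ∈ A := by
  by_contra! hmiss
  obtain ⟨hAs, hAind, hAcard⟩ := mem_maxIndepSetsOn.1 hA
  have hvA : v ∉ A := hmiss v (mem_insert_self _ _)
  have hdisj : Disjoint (G.neighborsIn s v) A :=
    Finset.disjoint_left.2 fun y hy => hmiss y (mem_insert_of_mem hy)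
  have := card_le_indepNumOn (insert_subset hv hAs) (isIndepSet_insert_of_disjoint hAs hAind hdisj)
  rw [card_insert_of_notMem hvA] at this
  omega

lemma card_maxIndepSetsOn_le_sum (hv : v ∈ s) :
    #(G.maxIndepSetsOn s) ≤
      ∑ y ∈ insert v (G.neighborsIn s v), #{A ∈ G.maxIndepSetsOn s | y ∈ A} :=
  calc #(G.maxIndepSetsOn s)
      ≤ #((insert v (G.neighborsIn s v)).biUnion fun y => {A ∈ G.maxIndepSetsOn s | y ∈ A}) :=
        card_le_card fun A hA => by
          obtain ⟨y, hy, hyA⟩ := exists_mem_of_mem_maxIndepSetsOn hA hv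
          exact mem_biUnion.2 ⟨y, hy, mem_filter.2 ⟨hA, hyA⟩⟩
    _ ≤ _ := card_biUnion_le

lemma indepNumOn_sdiff_add_one_le (hv : v ∈ s) :
    G.indepNumOn (s \ insert v (G.neighborsIn s v)) + 1 ≤ G.indepNumOn s := by
  obtain ⟨C, hC⟩ := G.exists_mem_maxIndepSetsOn (s \ insert v (G.neighborsIn s v))
  obtain ⟨hCt, hCind, hCcard⟩ := mem_maxIndepSetsOn.1 hC
  have hvC : v ∉ C := fun h => (mem_sdiff.1 (hCt h)).2 (mem_insert_self _ _)
  have hdisj : Disjoint (G.neighborsIn s v) C :=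
    Finset.disjoint_left.2 fun y hy hyC => (mem_sdiff.1 (hCt hyC)).2 (mem_insert_of_mem hy)
  have hCs : C ⊆ s := hCt.trans sdiff_subset
  have := card_le_indepNumOn (insert_subset hv hCs) (isIndepSet_insert_of_disjoint hCs hCind hdisj)
  rwa [card_insert_of_notMem hvC, hCcard] at this

lemma erase_mem_maxIndepSetsOn (hA : A ∈ G.maxIndepSetsOn s) (hvA : v ∈ A) :
    A.erase v ∈ G.maxIndepSetsOn (s \ insert v (G.neighborsIn s v)) := by
  obtain ⟨hAs, hAind, hAcard⟩ := mem_maxIndepSetsOn.1 hA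
  have hsub : A.erase v ⊆ s \ insert v (G.neighborsIn s v) := fun y hy => by
    obtain ⟨hyv, hyA⟩ := mem_erase.1 hy
    refine mem_sdiff.2 ⟨hAs hyA, fun hy' => ?_⟩
    rcases mem_insert.1 hy' with rfl | hadj
    · exact hyv rfl
    · exact hAind hvA hyA (Ne.symm hyv) (mem_neighborsIn.1 hadj).2
  have hind : G.IsIndepSet (A.erase v : Set V) := hAind.mono (by simp)
  have hle := card_le_indepNumOn hsub hind
  have hge := indepNumOn_sdiff_add_one_le (G := G) (hAs hvA)
  rw [card_erase_of_mem hvA] at hle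
  exact mem_maxIndepSetsOn.2 ⟨hsub, hind, by rw [card_erase_of_mem hvA]; omega⟩

lemma indepNumOn_sdiff_add_one_eq (hA : A ∈ G.maxIndepSetsOn s) (hvA : v ∈ A) :
    G.indepNumOn (s \ insert v (G.neighborsIn s v)) + 1 = G.indepNumOn s := by
  have h := (mem_maxIndepSetsOn.1 (erase_mem_maxIndepSetsOn hA hvA)).2.2
  rw [card_erase_of_mem hvA, (mem_maxIndepSetsOn.1 hA).2.2] at h
  have : 0 < #A := card_pos.2 ⟨v, hvA⟩
  rw [(mem_maxIndepSetsOn.1 hA).2.2] at this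
  omega

lemma card_filter_mem_maxIndepSetsOn_le :
    #{A ∈ G.maxIndepSetsOn s | v ∈ A} ≤
      #(G.maxIndepSetsOn (s \ insert v (G.neighborsIn s v))) :=
  card_le_card_of_injOn (fun A => A.erase v)
    (fun A hA => by
      obtain ⟨hA, hvA⟩ := mem_filter.1 hA
      exact erase_mem_maxIndepSetsOn hA hvA)
    (fun A hA B hB hAB => by
      simpa [insert_erase (mem_filter.1 hA).2, insert_erase (mem_filter.1 hB).2]
        using congrArg (insert v) hAB)

/-- Trading `v` for the two leaves hanging at it would enlarge the independent set. -/
lemma notMem_of_two_leaves {x : V} (hu : u ∈ s) (hx : x ∈ s) (hux : u ≠ x)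
    (hlu : G.neighborsIn s u = {v}) (hlx : G.neighborsIn s x = {v})
    (hA : A ∈ G.maxIndepSetsOn s) : v ∉ A := by
  intro hvA
  obtain ⟨hAs, hAind, hAcard⟩ := mem_maxIndepSetsOn.1 hA
  have hadj {w : V} (hw : G.neighborsIn s w = {v}) : G.Adj w v :=
    (mem_neighborsIn.1 (hw ▸ mem_singleton_self v)).2
  have huA : u ∉ A := fun h => hAind h hvA (hadj hlu).ne (hadj hlu)
  have hxA : x ∉ A := fun h => hAind h hvA (hadj hlx).ne (hadj hlx)
  have hB₀s : A.erase v ⊆ s := (erase_subset _ _).trans hAs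
  have hB₁ : G.IsIndepSet (↑(insert x (A.erase v)) : Set V) :=
    isIndepSet_insert_of_disjoint hB₀s (hAind.mono (by simp)) (by simp [hlx])
  have hB₂ : G.IsIndepSet (↑(insert u (insert x (A.erase v))) : Set V) :=
    isIndepSet_insert_of_disjoint (insert_subset hx hB₀s) hB₁ (by simp [hlu, (hadj hlx).ne'])
  have := card_le_indepNumOn (insert_subset hu (insert_subset hx hB₀s)) hB₂
  rw [card_insert_of_notMem (by simp [hux, huA]), card_insert_of_notMem (by simp [hxA]),
    card_erase_of_mem hvA] at this
  have : 0 < #A := card_pos.2 ⟨v, hvA⟩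
  omega

lemma mem_edgesOn {e : Sym2 V} :
    e ∈ G.edgesOn s ↔ (∀ a ∈ e, a ∈ s) ∧ e ∈ G.edgeSet := by
  simp [edgesOn, mem_sym2_iff]

/-- Every edge of `G[s]` that leaves `s \ N[v]` has an endpoint in `N(v)`. -/
lemma card_edgesOn_le (v : V) :
    #(G.edgesOn s) ≤
      #(G.edgesOn (s \ insert v (G.neighborsIn s v))) +
        ∑ y ∈ G.neighborsIn s v, #(G.neighborsIn s y) := by
  set t := s \ insert v (G.neighborsIn s v)
  set near := (G.neighborsIn s v).biUnion fun y => (G.neighborsIn s y).image fun z => s(y, z)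
  have hnear {a b : V} (hab : G.Adj a b) (ha : a ∈ s) (hb : b ∈ s)
      (hav : a ∈ insert v (G.neighborsIn s v)) : s(a, b) ∈ near := by
    rcases mem_insert.1 hav with rfl | hav
    · rw [Sym2.eq_swap]
      exact mem_biUnion.2
        ⟨b, by simp [hb, hab], mem_image.2 ⟨a, by simp [ha, hab.symm], rfl⟩⟩
    · exact mem_biUnion.2 ⟨a, hav, mem_image.2 ⟨b, by simp [hb, hab], rfl⟩⟩
  have hsub : G.edgesOn s ⊆ G.edgesOn t ∪ near := by
    intro e he
    induction e using Sym2.ind with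
    | h a b =>
    obtain ⟨hs, hab⟩ := mem_edgesOn.1 he
    have ha := hs a (Sym2.mem_mk_left a b)
    have hb := hs b (Sym2.mem_mk_right a b)
    rw [mem_edgeSet] at hab
    by_cases hav : a ∈ insert v (G.neighborsIn s v)
    · exact mem_union_right _ (hnear hab ha hb hav)
    by_cases hbv : b ∈ insert v (G.neighborsIn s v)
    · exact mem_union_right _ (Sym2.eq_swap ▸ hnear hab.symm hb ha hbv)
    refine mem_union_left _ (mem_edgesOn.2 ⟨fun c hc => ?_, hab⟩)
    rcases Sym2.mem_iff.1 hc with rfl | rfl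
    · exact mem_sdiff.2 ⟨ha, hav⟩
    · exact mem_sdiff.2 ⟨hb, hbv⟩
  calc #(G.edgesOn s) ≤ #(G.edgesOn t ∪ near) := card_le_card hsub
    _ ≤ #(G.edgesOn t) + #near := card_union_le _ _
    _ ≤ #(G.edgesOn t) + ∑ y ∈ G.neighborsIn s v, #(G.neighborsIn s y) := by
      gcongr
      exact card_biUnion_le.trans (sum_le_sum fun y _ => card_image_le)

lemma misExponent_sdiff_le (hv : v ∈ s)
    (hα : G.indepNumOn (s \ insert v (G.neighborsIn s v)) + 1 = G.indepNumOn s) :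
    G.misExponent (s \ insert v (G.neighborsIn s v)) ≤
      G.misExponent s - ∑ y ∈ G.neighborsIn s v, (3 - #(G.neighborsIn s y) : ℤ) := by
  have hcard : #(s \ insert v (G.neighborsIn s v)) + (#(G.neighborsIn s v) + 1) = #s := by
    rw [← card_insert_of_notMem (a := v) (s := G.neighborsIn s v) (by simp)]
    exact card_sdiff_add_card_eq_card (insert_subset hv (filter_subset _ _))
  have hedges := G.card_edgesOn_le (s := s) v
  simp only [misExponent, sum_sub_distrib, sum_const, nsmul_eq_mul]
  linarith

lemma misExponent_empty : G.misExponent ∅ = 0 := by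
  have hα : G.indepNumOn ∅ = 0 := by simp [indepNumOn]
  simp [misExponent, hα, edgesOn]

namespace Walk

variable {a b : V}

def IsPathIn (p : G.Walk a b) (s : Finset V) : Prop :=
  p.IsPath ∧ ∀ x ∈ p.support, x ∈ s

def IsLongestPathIn (p : G.Walk a b) (s : Finset V) : Prop :=
  p.IsPathIn s ∧ ∀ (c d : V) (r : G.Walk c d), r.IsPathIn s → r.length ≤ p.length

lemma IsPathIn.length_lt {p : G.Walk a b} (hp : p.IsPathIn s) : p.length < #s := by
  have h := card_le_card (s := p.support.toFinset) fun x hx => hp.2 x (List.mem_toFinset.1 hx)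
  rw [List.toFinset_card_of_nodup hp.1.support_nodup, length_support] at h
  omega

lemma IsPathIn.exists_isLongestPathIn {p : G.Walk a b} (hp : p.IsPathIn s) :
    ∃ (c d : V) (q : G.Walk c d), q.IsLongestPathIn s ∧ p.length ≤ q.length := by
  let P (n : ℕ) : Prop := ∃ (c d : V) (q : G.Walk c d), q.IsPathIn s ∧ q.length = n
  have hPp : P p.length := ⟨a, b, p, hp, rfl⟩
  obtain ⟨c, d, q, hq, hlen⟩ := Nat.findGreatest_spec hp.length_lt.le hPp
  refine ⟨c, d, q, ⟨hq, fun c' d' r hr => ?_⟩,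
    hlen ▸ Nat.le_findGreatest hp.length_lt.le hPp⟩
  exact hlen ▸ Nat.le_findGreatest hr.length_lt.le ⟨c', d', r, hr, rfl⟩

end Walk

/-- In a forest, any neighbour of the start of a longest path other than the next vertex would
close a cycle or extend the path. -/
lemma neighborsIn_subset_snd_of_isLongestPathIn (hG : G.IsAcyclic) {a b : V} {p : G.Walk a b}
    (hp : p.IsLongestPathIn s) : G.neighborsIn s a ⊆ {p.snd} := by
  obtain ⟨⟨hpath, hps⟩, hmax⟩ := hp
  intro y hy
  obtain ⟨hys, hay⟩ := mem_neighborsIn.1 hy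
  by_cases hyp : y ∈ p.support
  · exact mem_singleton.2 (hG.eq_snd_of_adj_start hpath hay hyp)
  · have := hmax y b (.cons hay.symm p)
      ⟨(Walk.cons_isPath_iff _ _).2 ⟨hpath, hyp⟩, by simpa [hys] using hps⟩
    simp at this

/-- Take `w` second on a longest path of `G[s]`. -/
lemma exists_leaf_of_isAcyclic (hG : G.IsAcyclic) (hv : v ∈ s)
    (hvN : (G.neighborsIn s v).Nonempty) :
    ∃ u w, u ∈ s ∧ G.neighborsIn s u = {w} ∧
      (#(G.neighborsIn s w) ≤ 2 ∨ ∃ x ∈ s, x ≠ u ∧ G.neighborsIn s x = {w}) := by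
  obtain ⟨y₀, hy₀⟩ := hvN
  obtain ⟨hy₀s, hvy₀⟩ := mem_neighborsIn.1 hy₀
  have hedge : (Walk.cons hvy₀ .nil).IsPathIn s :=
    ⟨(Path.singleton hvy₀).2, by simp [hv, hy₀s]⟩
  obtain ⟨u, d, p, hp, hlen⟩ := hedge.exists_isLongestPathIn
  cases p with
  | nil => simp at hlen
  | @cons _ w _ huw q =>
  obtain ⟨⟨hpath, hps⟩, hmax⟩ := hp
  obtain ⟨hq, huq⟩ := (Walk.cons_isPath_iff _ _).1 hpath
  have hleaf : ∀ y ∈ G.neighborsIn s w, y ∉ q.support → G.neighborsIn s y = {w} := by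
    intro y hy hyq
    obtain ⟨hys, hwy⟩ := mem_neighborsIn.1 hy
    have hrs : ∀ x ∈ (Walk.cons hwy.symm q).support, x ∈ s := by
      simpa [hys] using fun x hx => hps x (by simp [hx])
    have hr : (Walk.cons hwy.symm q).IsLongestPathIn s :=
      ⟨⟨(Walk.cons_isPath_iff _ _).2 ⟨hq, hyq⟩, hrs⟩, by simpa using hmax⟩
    refine Subset.antisymm ?_ (by simp [hps w (by simp), hwy.symm])
    simpa using neighborsIn_subset_snd_of_isLongestPathIn hG hr
  have hu : u ∈ G.neighborsIn s w := by simp [hps u (by simp), huw.symm]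
  refine ⟨u, w, hps u (by simp), hleaf u hu huq, ?_⟩
  by_cases hx : ∃ x ∈ G.neighborsIn s w, x ≠ u ∧ x ∉ q.support
  · obtain ⟨x, hx, hxu, hxq⟩ := hx
    exact Or.inr ⟨x, (mem_neighborsIn.1 hx).1, hxu, hleaf x hx hxq⟩
  · push Not at hx
    refine Or.inl ((card_le_card fun y hy => ?_).trans (card_le_two (a := u) (b := q.snd)))
    by_cases hyu : y = u
    · simp [hyu]
    · simp [hG.eq_snd_of_adj_start hq (mem_neighborsIn.1 hy).2 (hx y hy hyu)]

open Real
open scoped goldenRatio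

lemma goldenRatio_zpow_sub_one_add_zpow_sub_two (e : ℤ) :
    φ ^ (e - 1) + φ ^ (e - 2) = φ ^ e := by
  have h₁ : φ ^ (e - 1) = φ ^ (e - 2) * φ := by
    rw [← zpow_add_one₀ goldenRatio_ne_zero]; ring_nf
  have h₂ : φ ^ e = φ ^ (e - 2) * φ ^ 2 := by
    rw [← zpow_natCast, ← zpow_add₀ goldenRatio_ne_zero]; ring_nf
  rw [h₁, h₂, goldenRatio_sq]
  ring

lemma goldenRatio_zpow_le_zpow {a b : ℤ} (h : a ≤ b) : φ ^ a ≤ φ ^ b :=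
  zpow_le_zpow_right₀ one_lt_goldenRatio.le h

lemma card_filter_mem_maxIndepSetsOn_le_of_ssubset
    (ih : ∀ t ⊂ s, (#(G.maxIndepSetsOn t) : ℝ) ≤ φ ^ G.misExponent t) (hy : y ∈ s) :
    (#{A ∈ G.maxIndepSetsOn s | y ∈ A} : ℝ) ≤
      φ ^ (G.misExponent s - ∑ x ∈ G.neighborsIn s y, (3 - #(G.neighborsIn s x) : ℤ)) := by
  rcases eq_empty_or_nonempty {A ∈ G.maxIndepSetsOn s | y ∈ A} with h | ⟨A, hA⟩
  · rw [h, card_empty, Nat.cast_zero]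
    exact (zpow_pos goldenRatio_pos _).le
  obtain ⟨hA, hyA⟩ := mem_filter.1 hA
  have hssub : s \ insert y (G.neighborsIn s y) ⊂ s :=
    sdiff_ssubset (insert_subset hy (filter_subset _ _)) (insert_nonempty _ _)
  calc (#{A ∈ G.maxIndepSetsOn s | y ∈ A} : ℝ)
      ≤ #(G.maxIndepSetsOn (s \ insert y (G.neighborsIn s y))) := by
        exact_mod_cast card_filter_mem_maxIndepSetsOn_le
    _ ≤ φ ^ G.misExponent (s \ insert y (G.neighborsIn s y)) := ih _ hssub
    _ ≤ _ :=
      goldenRatio_zpow_le_zpow (misExponent_sdiff_le hy (indepNumOn_sdiff_add_one_eq hA hyA))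

lemma card_maxIndepSetsOn_le_of_isolated
    (ih : ∀ t ⊂ s, (#(G.maxIndepSetsOn t) : ℝ) ≤ φ ^ G.misExponent t) (hv : v ∈ s)
    (hiso : G.neighborsIn s v = ∅) :
    (#(G.maxIndepSetsOn s) : ℝ) ≤ φ ^ G.misExponent s := by
  have hsum := card_maxIndepSetsOn_le_sum (G := G) hv
  have hbranch := card_filter_mem_maxIndepSetsOn_le_of_ssubset ih hv
  rw [hiso, insert_empty, sum_singleton] at hsum
  rw [hiso, sum_empty, sub_zero] at hbranch
  exact (Nat.cast_le.2 hsum).trans hbranch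

lemma card_maxIndepSetsOn_le_of_leaf {w : V} (hdeg : ∀ x, #(G.neighborsIn s x) ≤ 3)
    (ih : ∀ t ⊂ s, (#(G.maxIndepSetsOn t) : ℝ) ≤ φ ^ G.misExponent t) (hu : u ∈ s)
    (hlu : G.neighborsIn s u = {w})
    (hw : #(G.neighborsIn s w) ≤ 2 ∨ ∃ x ∈ s, x ≠ u ∧ G.neighborsIn s x = {w}) :
    (#(G.maxIndepSetsOn s) : ℝ) ≤ φ ^ G.misExponent s := by
  obtain ⟨hws, huw⟩ := mem_neighborsIn.1 (hlu ▸ mem_singleton_self w)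
  have hsplit : (#(G.maxIndepSetsOn s) : ℝ) ≤
      #{A ∈ G.maxIndepSetsOn s | u ∈ A} + #{A ∈ G.maxIndepSetsOn s | w ∈ A} := by
    have := card_maxIndepSetsOn_le_sum (G := G) hu
    rw [hlu, sum_pair huw.ne] at this
    exact_mod_cast this
  have hu_branch := card_filter_mem_maxIndepSetsOn_le_of_ssubset ih hu
  rw [hlu, sum_singleton] at hu_branch
  rcases hw with hw | ⟨x, hx, hxu, hlx⟩
  · have hw_branch :
        (#{A ∈ G.maxIndepSetsOn s | w ∈ A} : ℝ) ≤ φ ^ (G.misExponent s - 2) := by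
      refine (card_filter_mem_maxIndepSetsOn_le_of_ssubset ih hws).trans
        (goldenRatio_zpow_le_zpow ?_)
      have := single_le_sum (f := fun x => (3 - #(G.neighborsIn s x) : ℤ))
        (fun x _ => by have := hdeg x; omega) (mem_neighborsIn.2 ⟨hu, huw.symm⟩)
      simp only [hlu, card_singleton] at this
      omega
    calc (#(G.maxIndepSetsOn s) : ℝ)
        ≤ φ ^ (G.misExponent s - 1) + φ ^ (G.misExponent s - 2) :=
          hsplit.trans (add_le_add (hu_branch.trans (goldenRatio_zpow_le_zpow (by omega)))
            hw_branch)
      _ = φ ^ G.misExponent s := goldenRatio_zpow_sub_one_add_zpow_sub_two _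
  · have hw_none : {A ∈ G.maxIndepSetsOn s | w ∈ A} = ∅ :=
      filter_false_of_mem fun A hA => notMem_of_two_leaves hu hx hxu.symm hlu hlx hA
    rw [hw_none, card_empty, Nat.cast_zero, add_zero] at hsplit
    exact hsplit.trans (hu_branch.trans (goldenRatio_zpow_le_zpow (by have := hdeg w; omega)))

lemma card_neighborsIn_le_degree [G.LocallyFinite] (s : Finset V) (v : V) :
    #(G.neighborsIn s v) ≤ G.degree v :=
  card_le_card fun _ hw => (mem_neighborFinset ..).2 (mem_neighborsIn.1 hw).2

theorem card_maxIndepSetsOn_le [G.LocallyFinite] (hG : G.IsAcyclic) (hdeg : ∀ v, G.degree v ≤ 3)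
    (s : Finset V) : (#(G.maxIndepSetsOn s) : ℝ) ≤ φ ^ G.misExponent s := by
  induction s using Finset.strongInduction with
  | H s ih =>
  rcases s.eq_empty_or_nonempty with rfl | ⟨v, hv⟩
  · rw [misExponent_empty, zpow_zero]
    exact_mod_cast card_le_card (filter_subset _ (powerset ∅))
  by_cases hedge : ∃ v ∈ s, (G.neighborsIn s v).Nonempty
  · obtain ⟨z, hz, hzN⟩ := hedge
    obtain ⟨u, w, hu, hlu, hw⟩ := exists_leaf_of_isAcyclic hG hz hzN
    exact card_maxIndepSetsOn_le_of_leaf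
      (fun x => (card_neighborsIn_le_degree s x).trans (hdeg x)) ih hu hlu hw
  · push Not at hedge
    exact card_maxIndepSetsOn_le_of_isolated ih hv (hedge v hv)

section Fintype

variable [Fintype V]

lemma indepNum_eq_indepNumOn_univ : _root_.indepNum G = G.indepNumOn univ := by
  refine IsGreatest.csSup_eq ⟨?_, ?_⟩
  · obtain ⟨A, hA⟩ := G.exists_mem_maxIndepSetsOn univ
    exact ⟨A, (mem_maxIndepSetsOn.1 hA).2⟩
  · rintro k ⟨A, hA, rfl⟩
    exact card_le_indepNumOn (subset_univ A) hA

lemma numMaxIndep_eq_card_maxIndepSetsOn_univ : numMaxIndep G = #(G.maxIndepSetsOn univ) := by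
  rw [numMaxIndep, ← Set.ncard_coe_finset]
  congr 1
  ext A
  simp [mem_maxIndepSetsOn, indepNum_eq_indepNumOn_univ, IsIndepSet']

lemma IsTree.misExponent_univ (hG : G.IsTree) :
    G.misExponent univ = 2 * (Fintype.card V : ℤ) - 3 * (G.indepNumOn univ : ℤ) + 1 := by
  have hedges : #(G.edgesOn univ) + 1 = Fintype.card V := by
    rw [← hG.card_edgeFinset]
    congr 2
    ext e
    simp [mem_edgesOn]
  simp only [misExponent, card_univ]
  omega

end Fintype

end SimpleGraph

open SimpleGraph

theorem stmt15 {V : Type*} [Fintype V] (T : SimpleGraph V) (hT : T.IsTree)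
    (hsub : ∀ v : V, (T.neighborSet v).ncard ≤ 3) (n α : ℕ)
    (hn : Fintype.card V = n) (hα : _root_.indepNum T = α) :
    (numMaxIndep T : ℝ) ≤ ((1 + Real.sqrt 5) / 2) ^ (2 * (n : ℤ) - 3 * (α : ℤ) + 1) := by
  classical
  have hdeg (v : V) : T.degree v ≤ 3 := by
    rw [← card_neighborSet_eq_degree, ← Nat.card_eq_fintype_card, Nat.card_coe_set_eq]
    exact hsub v
  subst hn hα
  rw [numMaxIndep_eq_card_maxIndepSetsOn_univ, indepNum_eq_indepNumOn_univ,
    ← hT.misExponent_univ]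
  exact card_maxIndepSetsOn_le hT.isAcyclic hdeg univ
end

section
/- If T is a tree whose order n is twice its independence number α (i.e., both partite sets of the bipartition have size α), then T has a perfect matching. -/
open SimpleGraph

/-!
The colour classes `A`, `B` of a bipartition are independent, so each has at most `α` vertices;
since `|A| + |B| = n = 2α`, both have exactly `α`. For any vertex set `X`, the independent set
`(X ∩ A) ∪ (B \ N(X))` then shows `|X ∩ A| ≤ |N(X) ∩ B|`, and symmetrically with `A` and `B`
swapped. Adding the two gives Hall's condition `|X| ≤ |N(X)|`, so Hall's theorem yields a perfect
matching. Trees are bipartite.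
-/

namespace SimpleGraph

variable {V : Type*} {G : SimpleGraph V} {s t : Set V}

theorem indepNum_eq_indepNum (G : SimpleGraph V) : _root_.indepNum G = G.indepNum := by
  unfold _root_.indepNum SimpleGraph.indepNum
  congr 1
  ext k
  exact exists_congr fun s => ⟨fun ⟨hs, hk⟩ => ⟨hs, hk⟩, fun hs => ⟨hs.isIndepSet, hs.card_eq⟩⟩

theorem IsIndepSet.ncard_le_indepNum [Finite V] (hs : G.IsIndepSet s) :
    s.ncard ≤ G.indepNum := by
  rw [Set.ncard_eq_toFinset_card s]
  exact IsIndepSet.card_le_indepNum (by simpa using hs)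

theorem IsBipartiteWith.compl_right (h : G.IsBipartiteWith s t) : G.IsBipartiteWith s sᶜ where
  disjoint := disjoint_compl_right
  mem_of_adj v w hvw := by
    rcases h.mem_of_adj hvw with ⟨hv, hw⟩ | ⟨hv, hw⟩
    · exact .inl ⟨hv, h.disjoint.notMem_of_mem_right hw⟩
    · exact .inr ⟨h.disjoint.notMem_of_mem_right hv, hw⟩

theorem IsBipartiteWith.isIndepSet_left (h : G.IsBipartiteWith s t) : G.IsIndepSet s :=
  fun v hv w hw _ hvw => by
    rcases h.mem_of_adj hvw with ⟨-, hw'⟩ | ⟨hv', -⟩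
    · exact h.disjoint.notMem_of_mem_left hw hw'
    · exact h.disjoint.notMem_of_mem_left hv hv'

theorem IsBipartiteWith.ncard_inter_le_ncard_inter_neighborSet [Finite V]
    (h : G.IsBipartiteWith s t) (ht : G.indepNum ≤ t.ncard) (X : Set V) :
    (X ∩ s).ncard ≤ ((⋃ x ∈ X, G.neighborSet x) ∩ t).ncard := by
  set N := ⋃ x ∈ X, G.neighborSet x
  have hindep : G.IsIndepSet ((X ∩ s) ∪ (t \ N)) := by
    rintro v (⟨hvX, hvs⟩ | ⟨hvt, hvN⟩) w (⟨hwX, hws⟩ | ⟨hwt, hwN⟩) hvw hadj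
    · exact h.isIndepSet_left hvs hws hvw hadj
    · exact hwN (Set.mem_biUnion hvX hadj)
    · exact hvN (Set.mem_biUnion hwX hadj.symm)
    · exact h.symm.isIndepSet_left hvt hwt hvw hadj
  have hdisj : Disjoint (X ∩ s) (t \ N) :=
    h.disjoint.mono Set.inter_subset_right Set.sdiff_subset
  have hle := hindep.ncard_le_indepNum
  rw [Set.ncard_union_eq hdisj] at hle
  have ht_split := Set.ncard_inter_add_ncard_sdiff_eq_ncard t N
  rw [Set.inter_comm] at ht_split
  omega

theorem IsBipartiteWith.ncard_le_ncard_neighborSet [Finite V] (h : G.IsBipartiteWith s sᶜ)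
    (hs : G.indepNum ≤ s.ncard) (hsc : G.indepNum ≤ sᶜ.ncard) (X : Set V) :
    X.ncard ≤ (⋃ x ∈ X, G.neighborSet x).ncard := by
  have hX := h.ncard_inter_le_ncard_inter_neighborSet hsc X
  have hXc := h.symm.ncard_inter_le_ncard_inter_neighborSet hs X
  rw [← Set.ncard_inter_add_ncard_sdiff_eq_ncard X s,
    ← Set.ncard_inter_add_ncard_sdiff_eq_ncard (⋃ x ∈ X, G.neighborSet x) s, Set.sdiff_eq,
    Set.sdiff_eq]
  exact (add_le_add hX hXc).trans_eq (add_comm _ _)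

theorem IsBipartite.exists_isPerfectMatching_of_card_eq_two_mul_indepNum [Fintype V]
    (hG : G.IsBipartite) (h : Fintype.card V = 2 * G.indepNum) :
    ∃ M : G.Subgraph, M.IsPerfectMatching := by
  classical
  obtain ⟨s, t, hst⟩ := hG.exists_isBipartiteWith
  have hbip := hst.compl_right
  have hs := hbip.isIndepSet_left.ncard_le_indepNum
  have hsc := hbip.symm.isIndepSet_left.ncard_le_indepNum
  have hcard := Set.ncard_add_ncard_compl s
  rw [Nat.card_eq_fintype_card] at hcard
  exact exists_isPerfectMatching_of_forall_ncard_le hbip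
    (hbip.ncard_le_ncard_neighborSet (by omega) (by omega))

end SimpleGraph

theorem stmt16 {V : Type*} [Fintype V] (T : SimpleGraph V) (hT : T.IsTree)
    (h : Fintype.card V = 2 * _root_.indepNum T) :
    ∃ M : T.Subgraph, M.IsPerfectMatching := by
  rw [T.indepNum_eq_indepNum] at h
  exact hT.isBipartite.exists_isPerfectMatching_of_card_eq_two_mul_indepNum h
end
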